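/- Let A be an MV-algebra in which every element a is archimedean (i.e., A is hyperarchimedean: for every a there exists n ≥ 1 with n·a = (n+1)·a). Then every prime ideal of A is maximal. -/

import Mathlib

/-- An MV-algebra: a set with ⊕ (written `+`), ¬ (written `-`) and `0`
satisfying the standard MV-algebra axioms. -/
class MVAlgebra (A : Type*) extends Add A, Neg A, Zero A where
  add_assoc : ∀ x y z : A, x + (y + z) = (x + y) + z
  add_comm : ∀ x y : A, x + y = y + x
  add_zero : ∀ x : A, x + 0 = x
  neg_neg : ∀ x : A, - -x = x
  add_neg_zero : ∀ x : A, x + -0 = -0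
  luk : ∀ x y : A, -(-x + y) + y = -(-y + x) + x

namespace MVAlgebra

variable {A : Type*} [MVAlgebra A]

/-- The top element `1 = ¬0`. -/
def one : A := -0

/-- Truncated difference `x ⊖ y = ¬(¬x ⊕ y)`. -/
def sub (x y : A) : A := -(-x + y)

/-- Supremum `x ∨ y = (x ⊖ y) ⊕ y`. -/
def sup (x y : A) : A := sub x y + y

/-- Infimum `x ∧ y = ¬(¬x ∨ ¬y)`. -/
def inf (x y : A) : A := -(sup (-x) (-y))

/-- The natural order: `x ≤ y` iff `x ⊖ y = 0`. -/
def le (x y : A) : Prop := sub x y = 0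

/-- `n • x = x ⊕ ⋯ ⊕ x` (`n` times). -/
def nsmul : ℕ → A → A
  | 0, _ => 0
  | n + 1, x => nsmul n x + x

/-- The distance `d(x,y) = (x ⊖ y) ⊕ (y ⊖ x)`. -/
def d (x y : A) : A := sub x y + sub y x

/-- Ideals: contain `0`, downward closed, closed under `⊕`. -/
def IsIdeal (I : Set A) : Prop :=
  (0 : A) ∈ I ∧ (∀ x y : A, x ∈ I → le y x → y ∈ I) ∧
    (∀ x y : A, x ∈ I → y ∈ I → x + y ∈ I)

/-- Prime ideals: proper ideals with `x ⊖ y ∈ P` or `y ⊖ x ∈ P` for all `x, y`. -/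
def IsPrime (P : Set A) : Prop :=
  IsIdeal P ∧ P ≠ Set.univ ∧ ∀ x y : A, sub x y ∈ P ∨ sub y x ∈ P

/-- The principal ideal `(a) = {x | x ≤ n·a for some n}`. -/
def princ (a : A) : Set A := {x : A | ∃ n : ℕ, le x (nsmul n a)}

end MVAlgebra

/-!
If `n·a = (n+1)·a`, then `b = n·a` is Boolean (`b ⊕ b = b`), so `b ⊖ ¬b = b` and `¬b ⊖ b = ¬b`;
primality of `P` therefore puts `b` or `¬b` in `P`. For a proper ideal `I ⊇ P` containing `a`,
`b ∈ I` forces `¬b ∉ I`, hence `b ∈ P`, and `a ≤ b` gives `a ∈ P`.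
-/

namespace MVAlgebra

variable {A : Type*} [MVAlgebra A]

lemma zero_add (x : A) : 0 + x = x := by
  have h := luk x (0 : A)
  rw [add_zero, add_zero, neg_neg, add_comm (-0) x, add_neg_zero, neg_neg] at h
  exact h.symm

lemma neg_add_self (x : A) : -x + x = one := by
  have h := luk x (-(0 : A))
  rw [add_neg_zero, neg_neg, zero_add] at h
  exact h.symm

lemma le_add_left (x y : A) : le x (y + x) := by
  have h : -x + (y + x) = -0 := by
    rw [add_comm y x, add_assoc, neg_add_self, add_comm]
    exact add_neg_zero y
  rw [le, sub, h, neg_neg]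

lemma le_one (x : A) : le x one := by
  rw [le, sub, one, add_neg_zero, neg_neg]

lemma le_nsmul (a : A) {n : ℕ} (hn : 1 ≤ n) : le a (nsmul n a) := by
  obtain ⟨m, rfl⟩ := Nat.exists_eq_add_of_le' hn
  exact le_add_left a (nsmul m a)

lemma nsmul_add_nsmul_of_nsmul_succ_eq {a : A} {n : ℕ} (h : nsmul n a = nsmul (n + 1) a) :
    ∀ k : ℕ, nsmul n a + nsmul k a = nsmul n a
  | 0 => add_zero _
  | k + 1 => by
    rw [nsmul, add_assoc, nsmul_add_nsmul_of_nsmul_succ_eq h k]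
    exact h.symm

lemma le_sub_neg_of_add_self {b : A} (hb : b + b = b) : le b (sub b (-b)) := by
  have h := luk b (-b)
  rw [neg_neg, hb, neg_add_self] at h
  -- `h : b ⊙ b ⊕ ¬b = 1`, which is `b ⊖ (b ⊙ b) = 0`
  rw [le, sub, sub, add_comm (-b), h, one, neg_neg]

lemma sub_neg_self_of_add_self {b : A} (hb : b + b = b) : sub (-b) b = -b := by
  rw [sub, neg_neg, hb]

namespace IsIdeal

variable {I : Set A}

lemma mem_of_le (hI : IsIdeal I) {x y : A} (hx : x ∈ I) (hyx : le y x) : y ∈ I :=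
  hI.2.1 x y hx hyx

lemma nsmul_mem (hI : IsIdeal I) {a : A} (ha : a ∈ I) : ∀ k : ℕ, nsmul k a ∈ I
  | 0 => hI.1
  | k + 1 => hI.2.2 _ _ (nsmul_mem hI ha k) ha

lemma eq_univ_of_mem_of_neg_mem (hI : IsIdeal I) {b : A} (hb : b ∈ I) (hnb : -b ∈ I) :
    I = Set.univ := by
  have hone : one ∈ I := by
    simpa only [neg_add_self] using hI.2.2 _ _ hnb hb
  exact Set.eq_univ_of_forall fun x => hI.mem_of_le hone (le_one x)

end IsIdeal

lemma IsPrime.mem_or_neg_mem_of_add_self {P : Set A} (hP : IsPrime P) {b : A}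
    (hb : b + b = b) : b ∈ P ∨ -b ∈ P := by
  rcases hP.2.2 b (-b) with h | h
  · exact Or.inl (hP.1.mem_of_le h (le_sub_neg_of_add_self hb))
  · exact Or.inr (sub_neg_self_of_add_self hb ▸ h)

end MVAlgebra

open MVAlgebra in
/-- in a hyperarchimedean MV-algebra (every element `a`
satisfies `n·a = (n+1)·a` for some `n ≥ 1`), every prime ideal is maximal
(proper and maximal among proper ideals). -/
theorem hyperarchimedean_prime_is_maximal {A : Type*} [MVAlgebra A]
    (hyper : ∀ a : A, ∃ n : ℕ, 1 ≤ n ∧ nsmul n a = nsmul (n + 1) a)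
    (P : Set A) (hP : IsPrime P) :
    P ≠ Set.univ ∧
      ∀ I : Set A, IsIdeal I → P ⊆ I → I ≠ Set.univ → I = P := by
  refine ⟨hP.2.1, fun I hI hPI hIproper => Set.Subset.antisymm (fun a ha => ?_) hPI⟩
  obtain ⟨n, hn, hna⟩ := hyper a
  have hboolean : nsmul n a + nsmul n a = nsmul n a := nsmul_add_nsmul_of_nsmul_succ_eq hna n
  rcases hP.mem_or_neg_mem_of_add_self hboolean with hbP | hnbP
  · exact hP.1.mem_of_le hbP (le_nsmul a hn)
  · exact absurd (hI.eq_univ_of_mem_of_neg_mem (hI.nsmul_mem ha n) (hPI hnbP)) hIproper
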